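/- For u, v in S^m (fuzzy star-shaped numbers with compact support), if d_p(u,v) = 0 then [u]_α = [v]_α for almost every α ∈ (0,1], and hence (using left-continuity of α ↦ [u]_α in the Hausdorff metric) u = v. -/

import Mathlib

open Set Metric MeasureTheory

def cut {m : ℕ} (u : EuclideanSpace ℝ (Fin m) → ℝ) (α : ℝ) :
    Set (EuclideanSpace ℝ (Fin m)) := {x | α ≤ u x}

/-- `u` is a fuzzy star-shaped number with compact support (`u ∈ Sᵐ`). -/
def IsFSN {m : ℕ} (u : EuclideanSpace ℝ (Fin m) → ℝ) : Prop :=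
  (∀ x, u x ∈ Set.Icc (0:ℝ) 1) ∧ (∃ x, u x = 1) ∧ UpperSemicontinuous u ∧
  (∀ α ∈ Set.Ioc (0:ℝ) 1, ∃ x ∈ cut u α, StarConvex ℝ x (cut u α)) ∧
  IsCompact (closure {x | 0 < u x})

/-- The `L_p` distance between fuzzy sets via Hausdorff distance of level cuts. -/
noncomputable def dp {m : ℕ} (p : ℝ) (u v : EuclideanSpace ℝ (Fin m) → ℝ) : ℝ :=
  (∫ α in Set.Ioc (0:ℝ) 1, hausdorffDist (cut u α) (cut v α) ^ p) ^ (1/p)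


/-!
The map `α ↦ [u]_α` is left-continuous on `(0, 1]` for the Hausdorff metric: the cuts `[u]_β`,
`β < α`, are compact and decrease to `[u]_α`, so they eventually lie in any neighbourhood of it.
Hence `F α = H([u]_α, [v]_α)` is left-continuous, in particular measurable, and bounded by the
diameter of the supports, so `d_p(u, v) = 0` forces `F = 0` almost everywhere. A left-continuous
function vanishing a.e. vanishes everywhere, since every interval `(α - δ, α)` has positive
measure; closed cuts at Hausdorff distance zero coincide, and `u` is recovered from its cuts.
-/

open Filter Topology

theorem tendsto_ceil_mul_sub_one_div_nhdsLT (x : ℝ) :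
    Tendsto (fun n : ℕ => ((⌈(n + 1) * x⌉ : ℝ) - 1) / (n + 1)) atTop (𝓝[<] x) := by
  have hpos (n : ℕ) : (0 : ℝ) < n + 1 := n.cast_add_one_pos
  have lt_x (n : ℕ) : ((⌈(n + 1) * x⌉ : ℝ) - 1) / (n + 1) < x := by
    rw [div_lt_iff₀ (hpos n)]
    linarith [Int.ceil_lt_add_one ((n + 1) * x)]
  have ge_x (n : ℕ) : x - 1 / (n + 1) ≤ ((⌈(n + 1) * x⌉ : ℝ) - 1) / (n + 1) := by
    rw [sub_div' (hpos n).ne', div_le_div_iff_of_pos_right (hpos n)]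
    linarith [Int.le_ceil ((n + 1) * x)]
  refine tendsto_nhdsWithin_iff.2 ⟨?_, Eventually.of_forall lt_x⟩
  have h_lower : Tendsto (fun n : ℕ => x - 1 / ((n : ℝ) + 1)) atTop (𝓝 x) := by
    simpa using tendsto_one_div_add_atTop_nhds_zero_nat.const_sub x
  exact tendsto_of_tendsto_of_tendsto_of_le_of_le h_lower tendsto_const_nhds ge_x
    fun n => (lt_x n).le

theorem aemeasurable_restrict_of_continuousWithinAt_Iio {X : Type*} [TopologicalSpace X]
    [TopologicalSpace.PseudoMetrizableSpace X] [MeasurableSpace X] [BorelSpace X] {f : ℝ → X}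
    {μ : Measure ℝ} {s : Set ℝ} (hs : MeasurableSet s)
    (hf : ∀ x ∈ s, ContinuousWithinAt f (Iio x) x) :
    AEMeasurable f (μ.restrict s) := by
  -- `f` sampled at the point of `(n + 1)⁻¹ ℤ` just below `x` factors through `ℤ`
  have hmeas (n : ℕ) : Measurable fun x : ℝ => f ((⌈(n + 1) * x⌉ - 1) / (n + 1)) :=
    (measurable_of_countable fun k : ℤ => f ((k - 1) / (n + 1))).comp
      (Int.measurable_ceil.comp (measurable_const_mul _))
  refine aemeasurable_of_tendsto_metrizable_ae atTop (fun n => (hmeas n).aemeasurable) ?_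
  exact (ae_restrict_iff' hs).2 <| ae_of_all _ fun x hx =>
    (hf x hx).tendsto.comp (tendsto_ceil_mul_sub_one_div_nhdsLT x)

theorem eq_of_continuousWithinAt_Iio_of_ae_eq {X : Type*} [TopologicalSpace X] [T1Space X]
    {f : ℝ → X} {a : ℝ} {c : X} {s : Set ℝ} (hf : ContinuousWithinAt f (Iio a) a)
    (hs : s ∈ 𝓝[<] a) (h : ∀ᵐ x ∂volume.restrict s, f x = c) : f a = c := by
  by_contra hne
  have hev : ∀ᶠ x in 𝓝[<] a, x ∈ s ∧ f x ≠ c :=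
    Eventually.and hs (hf.eventually (isOpen_ne.mem_nhds hne))
  obtain ⟨l, hl, hsub⟩ := mem_nhdsLT_iff_exists_Ioo_subset.1 hev
  have hnull : volume ({x | f x ≠ c} ∩ s) = 0 :=
    nonpos_iff_eq_zero.1 ((Measure.le_restrict_apply _ _).trans (ae_iff.1 h).le)
  have : volume (Ioo l a) = 0 :=
    measure_mono_null (fun x hx => (⟨(hsub hx).2, (hsub hx).1⟩ : x ∈ {x | f x ≠ c} ∩ s))
      hnull
  simp only [Real.volume_Ioo, ENNReal.ofReal_eq_zero, sub_nonpos] at this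
  exact (not_le.2 hl) this

theorem abs_hausdorffDist_sub_hausdorffDist_le {X : Type*} [PseudoMetricSpace X]
    {s t s' t' : Set X} (hs : hausdorffEDist s s' ≠ ⊤) (ht : hausdorffEDist t t' ≠ ⊤) :
    |hausdorffDist s t - hausdorffDist s' t'| ≤ hausdorffDist s s' + hausdorffDist t t' := by
  have hs' : hausdorffEDist s' s ≠ ⊤ := by rwa [hausdorffEDist_comm]
  have ht' : hausdorffEDist t' t ≠ ⊤ := by rwa [hausdorffEDist_comm]
  rw [abs_sub_le_iff]
  constructor
  · linarith [hausdorffDist_triangle hs (u := t), hausdorffDist_triangle' ht' (s := s'),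
      hausdorffDist_comm (s := t) (t := t')]
  · linarith [hausdorffDist_triangle hs' (u := t'), hausdorffDist_triangle' ht (s := s),
      hausdorffDist_comm (s := s) (t := s')]

section Cut

variable {m : ℕ} {u v : EuclideanSpace ℝ (Fin m) → ℝ} {α β : ℝ}

theorem cut_anti : Antitone (cut u) := fun _ _ hβα _ hx => hβα.trans hx

theorem isClosed_cut (hu : UpperSemicontinuous u) (α : ℝ) : IsClosed (cut u α) :=
  upperSemicontinuous_iff_isClosed_preimage.1 hu α

theorem cut_subset_closure_support (hα : 0 < α) : cut u α ⊆ closure {x | 0 < u x} :=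
  fun _ hx => subset_closure (hα.trans_le hx)

namespace IsFSN

theorem isCompact_cut (hu : IsFSN u) (hα : 0 < α) : IsCompact (cut u α) :=
  hu.2.2.2.2.of_isClosed_subset (isClosed_cut hu.2.2.1 α) (cut_subset_closure_support hα)

theorem cut_nonempty (hu : IsFSN u) (hα : α ≤ 1) : (cut u α).Nonempty := by
  obtain ⟨x, hx⟩ := hu.2.1
  exact ⟨x, show α ≤ u x from hx ▸ hα⟩

theorem hausdorffEDist_cut_ne_top (hu : IsFSN u) (hv : IsFSN v) (hα : α ∈ Ioc 0 1)
    (hβ : β ∈ Ioc 0 1) : hausdorffEDist (cut u α) (cut v β) ≠ ⊤ :=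
  hausdorffEDist_ne_top_of_nonempty_of_bounded (hu.cut_nonempty hα.2) (hv.cut_nonempty hβ.2)
    (hu.isCompact_cut hα.1).isBounded (hv.isCompact_cut hβ.1).isBounded

theorem hausdorffDist_cut_le_diam (hu : IsFSN u) (hv : IsFSN v) (hα : α ∈ Ioc 0 1) :
    hausdorffDist (cut u α) (cut v α) ≤
      diam (closure {x | 0 < u x} ∪ closure {x | 0 < v x}) :=
  (hausdorffDist_le_diam (hu.cut_nonempty hα.2) (hu.isCompact_cut hα.1).isBounded
    (hv.cut_nonempty hα.2) (hv.isCompact_cut hα.1).isBounded).trans <|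
    diam_mono (union_subset_union (cut_subset_closure_support hα.1)
      (cut_subset_closure_support hα.1)) (hu.2.2.2.2.isBounded.union hv.2.2.2.2.isBounded)

theorem eventually_cut_subset (hu : IsFSN u) (hα : 0 < α) {U : Set (EuclideanSpace ℝ (Fin m))}
    (hU : IsOpen U) (hαU : cut u α ⊆ U) : ∀ᶠ β in 𝓝[<] α, cut u β ⊆ U := by
  have : Nonempty (Ioo 0 α) := ⟨⟨α / 2, half_pos hα, half_lt_self hα⟩⟩
  have hinter : ⋂ β : Ioo 0 α, cut u β ⊆ cut u α := fun x hx => by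
    by_contra hxα
    obtain ⟨β, hβ, hβα⟩ := exists_between (max_lt hα (not_le.1 hxα))
    exact (max_lt_iff.1 hβ).2.not_ge (mem_iInter.1 hx ⟨β, (max_lt_iff.1 hβ).1, hβα⟩)
  obtain ⟨β₀, hβ₀⟩ := exists_subset_nhds_of_isCompact'
    (V := fun β : Ioo 0 α => cut u β) (fun β γ => ⟨max β γ, cut_anti (le_max_left β γ),
      cut_anti (le_max_right β γ)⟩) (fun β => hu.isCompact_cut β.2.1)
    (fun β => isClosed_cut hu.2.2.1 β) fun x hx => hU.mem_nhds (hαU (hinter hx))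
  filter_upwards [Ioo_mem_nhdsLT β₀.2.2] with β hβ
  exact (cut_anti hβ.1.le).trans hβ₀

theorem tendsto_hausdorffDist_cut (hu : IsFSN u) (hα : 0 < α) :
    Tendsto (fun β => hausdorffDist (cut u β) (cut u α)) (𝓝[<] α) (𝓝 0) := by
  refine Metric.tendsto_nhds.2 fun ε hε => ?_
  filter_upwards [hu.eventually_cut_subset hα isOpen_thickening
    (self_subset_thickening (half_pos hε) _), self_mem_nhdsWithin] with β hβ hβα
  have hle : hausdorffDist (cut u β) (cut u α) ≤ ε / 2 := by
    refine hausdorffDist_le_of_mem_dist (half_pos hε).le (fun x hx => ?_) fun x hx => ?_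
    · obtain ⟨y, hy, hxy⟩ := mem_thickening_iff.1 (hβ hx)
      exact ⟨y, hy, hxy.le⟩
    · exact ⟨x, cut_anti hβα.le hx, by simpa using (half_pos hε).le⟩
  rw [Real.dist_eq, sub_zero, abs_of_nonneg hausdorffDist_nonneg]
  linarith

theorem continuousWithinAt_hausdorffDist_cut (hu : IsFSN u) (hv : IsFSN v) (hα : α ∈ Ioc 0 1) :
    ContinuousWithinAt (fun β => hausdorffDist (cut u β) (cut v β)) (Iio α) α := by
  refine tendsto_iff_dist_tendsto_zero.2 <|
    squeeze_zero' (Eventually.of_forall fun _ => dist_nonneg) ?_ <| by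
      simpa using (hu.tendsto_hausdorffDist_cut hα.1).add (hv.tendsto_hausdorffDist_cut hα.1)
  filter_upwards [Ioo_mem_nhdsLT hα.1] with β hβ
  have hβ1 : β ∈ Ioc 0 1 := ⟨hβ.1, hβ.2.le.trans hα.2⟩
  exact abs_hausdorffDist_sub_hausdorffDist_le (hu.hausdorffEDist_cut_ne_top hu hβ1 hα)
    (hv.hausdorffEDist_cut_ne_top hv hβ1 hα)

theorem integrableOn_hausdorffDist_cut_rpow (hu : IsFSN u) (hv : IsFSN v) {p : ℝ} (hp : 0 ≤ p) :
    IntegrableOn (fun α => hausdorffDist (cut u α) (cut v α) ^ p) (Ioc 0 1) := by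
  have hmeas := aemeasurable_restrict_of_continuousWithinAt_Iio (μ := volume) measurableSet_Ioc
    fun α hα => hu.continuousWithinAt_hausdorffDist_cut hv hα
  refine IntegrableOn.of_bound measure_Ioc_lt_top (hmeas.pow_const p).aestronglyMeasurable
    ((diam (closure {x | 0 < u x} ∪ closure {x | 0 < v x})) ^ p) ?_
  refine (ae_restrict_iff' measurableSet_Ioc).2 (ae_of_all _ fun α hα => ?_)
  rw [Real.norm_of_nonneg (Real.rpow_nonneg hausdorffDist_nonneg p)]
  exact Real.rpow_le_rpow hausdorffDist_nonneg (hu.hausdorffDist_cut_le_diam hv hα) hp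

end IsFSN

theorem le_of_forall_cut_subset (hu : ∀ x, u x ≤ 1) (hv : ∀ x, 0 ≤ v x)
    (h : ∀ α ∈ Ioc 0 1, cut u α ⊆ cut v α) : u ≤ v := fun x => by
  rcases le_or_gt (u x) 0 with hux | hux
  · exact hux.trans (hv x)
  · exact h (u x) ⟨hux, hu x⟩ (le_refl (u x))

end Cut

theorem eq_of_dp_eq_zero {m : ℕ} (p : ℝ) (hp : 1 ≤ p)
    (u v : EuclideanSpace ℝ (Fin m) → ℝ) (hu : IsFSN u) (hv : IsFSN v)
    (h : dp p u v = 0) :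
    (∀ᵐ α ∂(volume.restrict (Set.Ioc (0:ℝ) 1)), cut u α = cut v α) ∧ u = v := by
  set F : ℝ → ℝ := fun α => hausdorffDist (cut u α) (cut v α)
  have hFp_nonneg : 0 ≤ fun α => F α ^ p := fun α => Real.rpow_nonneg hausdorffDist_nonneg p
  have hintegral : ∫ α in Ioc 0 1, F α ^ p = 0 :=
    ((Real.rpow_eq_zero_iff_of_nonneg (integral_nonneg hFp_nonneg)).1 h).1
  have hF_ae : ∀ᵐ α ∂volume.restrict (Ioc 0 1), F α = 0 := by
    filter_upwards [(integral_eq_zero_iff_of_nonneg hFp_nonneg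
      (hu.integrableOn_hausdorffDist_cut_rpow hv (by linarith))).1 hintegral] with α hα
    exact ((Real.rpow_eq_zero_iff_of_nonneg hausdorffDist_nonneg).1 hα).1
  have hcut : ∀ α ∈ Ioc 0 1, cut u α = cut v α := fun α hα =>
    ((isClosed_cut hu.2.2.1 α).hausdorffDist_zero_iff_eq (isClosed_cut hv.2.2.1 α)
      (hu.hausdorffEDist_cut_ne_top hv hα hα)).1 <|
    eq_of_continuousWithinAt_Iio_of_ae_eq (hu.continuousWithinAt_hausdorffDist_cut hv hα)
      (Ioc_mem_nhdsLT_of_mem hα) hF_ae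
  exact ⟨ae_restrict_of_forall_mem measurableSet_Ioc hcut,
    le_antisymm (le_of_forall_cut_subset (fun x => (hu.1 x).2) (fun x => (hv.1 x).1)
      fun α hα => (hcut α hα).le)
    (le_of_forall_cut_subset (fun x => (hv.1 x).2) (fun x => (hu.1 x).1)
      fun α hα => (hcut α hα).ge)⟩
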